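/- For every integer m and nonnegative integer k: 2·∑_{j=0}^{k} (−1)^j·T_{m−4k−1+4j} = (−1)^k·T_m + T_{m−4k−4}. -/

import Mathlib

/-- Tribonacci numbers on the naturals. -/
def tribN : ℕ → ℤ
  | 0 => 0
  | 1 => 1
  | 2 => 1
  | n + 3 => tribN (n + 2) + tribN (n + 1) + tribN n

/-- Tribonacci at negative indices: `tribNeg n = T (-n)`, via `T (-n) = 2·T (3-n) - T (4-n)`. -/
def tribNeg : ℕ → ℤ
  | 0 => tribN 0
  | 1 => 2 * tribN 2 - tribN 3
  | 2 => 2 * tribN 1 - tribN 2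
  | 3 => 2 * tribN 0 - tribN 1
  | 4 => 2 * tribNeg 1 - tribN 0
  | n + 5 => 2 * tribNeg (n + 2) - tribNeg (n + 1)

/-- Tribonacci sequence extended to all integers. -/
def T (m : ℤ) : ℤ := if 0 ≤ m then tribN m.toNat else tribNeg (-m).toNat

/-!
The recurrence `T (m - 4) = 2 T (m - 1) - T m` holds on all of `ℤ`: it is how `T` is continued to
negative indices, and it follows from the Tribonacci recurrence on `ℕ`. It splits each term
`2 T (a - 1)` as `T a + T (a - 4)`, so the alternating sum telescopes; formally, an induction on `k`
that shifts `m` by `4`.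
-/

lemma tribN_eq_two_mul_sub (n : ℕ) : tribN n = 2 * tribN (n + 3) - tribN (n + 4) := by
  simp only [tribN]
  ring

lemma T_natCast (n : ℕ) : T n = tribN n := by
  simp [T]

lemma T_neg_natCast_succ (n : ℕ) : T (-(n + 1 : ℕ)) = tribNeg (n + 1) := by
  simp only [T, Left.nonneg_neg_iff, neg_neg, Int.toNat_natCast]
  split_ifs <;> omega

lemma T_sub_four (m : ℤ) : T (m - 4) = 2 * T (m - 1) - T m := by
  obtain ⟨n, rfl | rfl⟩ := Int.eq_nat_or_neg m
  · rcases lt_or_ge n 4 with hn | hn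
    · interval_cases n <;> decide
    · obtain ⟨n, rfl⟩ := Nat.exists_eq_add_of_le' hn
      have h := tribN_eq_two_mul_sub n
      push_cast
      simpa [add_sub_assoc, ← T_natCast] using h
  · rcases n with _ | n
    · decide
    · have e4 : -((n + 1 : ℕ) : ℤ) - 4 = -((n + 4 + 1 : ℕ) : ℤ) := by push_cast; ring
      have e1 : -((n + 1 : ℕ) : ℤ) - 1 = -((n + 1 + 1 : ℕ) : ℤ) := by push_cast; ring
      rw [e4, e1, T_neg_natCast_succ, T_neg_natCast_succ, T_neg_natCast_succ]
      rfl

theorem alternating_sum_eq_of_sub_four {R : Type*} [CommRing R] (f : ℤ → R)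
    (hf : ∀ m, f (m - 4) = 2 * f (m - 1) - f m) (m : ℤ) (k : ℕ) :
    2 * ∑ j ∈ Finset.range (k + 1), (-1 : R) ^ j * f (m - 4 * k - 1 + 4 * j) =
      (-1 : R) ^ k * f m + f (m - 4 * k - 4) := by
  induction k generalizing m with
  | zero => simp [hf m]
  | succ k ih =>
    have hshift : ∀ j : ℕ, m - 4 * (k + 1 : ℕ) - 1 + 4 * j = m - 4 - 4 * k - 1 + 4 * j := by
      intro j; push_cast; ring
    have hlast : m - 4 * (k + 1 : ℕ) - 1 + 4 * (k + 1 : ℕ) = m - 1 := by push_cast; ring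
    have hend : m - 4 * (k + 1 : ℕ) - 4 = m - 4 - 4 * k - 4 := by push_cast; ring
    rw [Finset.sum_range_succ, mul_add, hlast, hend]
    simp only [hshift]
    rw [ih, hf]
    ring

theorem stmt6 : ∀ (m : ℤ) (k : ℕ),
    2 * ∑ j ∈ Finset.range (k + 1), (-1 : ℤ) ^ j * T (m - 4 * k - 1 + 4 * j) =
      (-1 : ℤ) ^ k * T m + T (m - 4 * k - 4) :=
  alternating_sum_eq_of_sub_four T T_sub_four
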